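/- arXiv:1302.3783 — 5 statements merged into one kernel-verified Lean document; each statement's English description precedes it below -/
import Mathlib

section
/- Two binary words u, v ∈ {0,1}* are 2-Abelian equivalent (i.e., |u|_x = |v|_x for all words x of length at most 2) if and only if |u| = |v|, |u|_{00} = |v|_{00}, |u|_{11} = |v|_{11}, and u and v have the same first letter (or are both empty). -/
/-- Number of occurrences of `x` as a factor of `u`. -/
def occ {α : Type*} [DecidableEq α] (u x : List α) : ℕ :=
  ((List.range (u.length + 1)).filter (fun i => decide (x <+: u.drop i))).length

/-- `k`-Abelian equivalence: same number of occurrences of every word of length at most `k`. -/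
def KAbEq {α : Type*} [DecidableEq α] (k : ℕ) (u v : List α) : Prop :=
  ∀ x : List α, x.length ≤ k → occ u x = occ v x

/-- The factor of the infinite word `w` of length `n` starting at position `i`. -/
def factorAt {α : Type*} (w : ℕ → α) (i n : ℕ) : List α :=
  (List.range n).map (fun j => w (i + j))

/-- `k`-Abelian complexity: the number of `k`-Abelian classes of length-`n` factors of `w`. -/
noncomputable def rho {α : Type*} [DecidableEq α] (k : ℕ) (w : ℕ → α) (n : ℕ) : ℕ :=
  Set.ncard { C : Set (List α) | ∃ i : ℕ,
    C = { v | (∃ j : ℕ, v = factorAt w j n) ∧ KAbEq k v (factorAt w i n) } }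

/-!
A binary word of length `n ≥ 1` has `n - 1` factors of length two; those other than `00` and
`11` mark the changes of letter, which alternate between `a(!a)` and `(!a)a` starting from the
first letter `a`. So the length, `|u|_00`, `|u|_11` and the first letter determine every
`|u|_x` with `|x| = 2`, and these together with the first letter determine the letter counts:
every occurrence of `b` is either the first letter or preceded by `b` or `!b`.
-/

section Occurrences

variable {α : Type*} [DecidableEq α]

lemma occ_nil_right (u : List α) : occ u [] = u.length + 1 := by
  simp [occ, List.nil_prefix]

lemma occ_eq_zero_of_length_lt {u x : List α} (h : u.length < x.length) : occ u x = 0 := by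
  simp only [occ, List.length_eq_zero_iff, List.filter_eq_nil_iff, decide_eq_true_eq]
  intro i _ hx
  have := hx.length_le
  simp only [List.length_drop] at this
  omega

lemma occ_cons (c : α) (u x : List α) :
    occ (c :: u) x = occ u x + if x <+: c :: u then 1 else 0 := by
  unfold occ
  rw [List.length_cons, List.range_succ_eq_map, List.filter_cons]
  by_cases h : x <+: c :: u <;>
    simp [h, List.filter_map, Function.comp_def, List.drop_succ_cons, Nat.add_comm]

lemma occ_cons_singleton (c : α) (u : List α) (a : α) :
    occ (c :: u) [a] = occ u [a] + if a = c then 1 else 0 := by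
  simp [occ_cons, List.cons_prefix_cons]

lemma occ_cons_pair (c : α) (u : List α) (a b : α) :
    occ (c :: u) [a, b] = occ u [a, b] + if a = c ∧ u.head? = some b then 1 else 0 := by
  rcases u with _ | ⟨d, u⟩ <;> simp [occ_cons, List.cons_prefix_cons, eq_comm]

end Occurrences

lemma occ_pairs_add_one (c : Bool) (w : List Bool) :
    occ (c :: w) [false, false] + occ (c :: w) [false, true] + occ (c :: w) [true, false] +
      occ (c :: w) [true, true] + 1 = (c :: w).length := by
  induction w generalizing c with
  | nil => simp [occ_eq_zero_of_length_lt]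
  | cons d w ih =>
    simp only [occ_cons_pair c (d :: w), List.head?_cons, List.length_cons] at ih ⊢
    specialize ih d
    cases c <;> cases d <;> simp <;> omega

lemma occ_singleton_eq (u : List Bool) (b : Bool) :
    occ u [b] = occ u [b, b] + occ u [!b, b] + if u.head? = some b then 1 else 0 := by
  induction u with
  | nil => simp [occ_eq_zero_of_length_lt]
  | cons c w ih =>
    rw [occ_cons_singleton, occ_cons_pair, occ_cons_pair, ih]
    cases b <;> cases c <;> simp <;> omega

lemma occ_changes_alternate (a : Bool) (w : List Bool) :
    occ (a :: w) [!a, a] ≤ occ (a :: w) [a, !a] ∧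
      occ (a :: w) [a, !a] ≤ occ (a :: w) [!a, a] + 1 := by
  induction w generalizing a with
  | nil => simp [occ_eq_zero_of_length_lt]
  | cons d w ih =>
    have := ih d
    simp only [occ_cons_pair a (d :: w), List.head?_cons]
    cases a <;> cases d <;> simp at this ⊢ <;> omega

lemma kAbEq_two_iff (u v : List Bool) :
    KAbEq 2 u v ↔
      u.length = v.length ∧ u.head? = v.head? ∧ ∀ a b, occ u [a, b] = occ v [a, b] := by
  constructor
  · intro h
    refine ⟨by simpa [occ_nil_right] using h [] (by simp), Option.ext fun b => ?_,
      fun a b => h [a, b] (by simp)⟩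
    have := h [b] (by simp)
    rw [occ_singleton_eq, occ_singleton_eq v, h [b, b] (by simp), h [!b, b] (by simp)] at this
    split_ifs at this <;> simp_all
  · rintro ⟨hlen, hhead, hpair⟩ x hx
    match x, hx with
    | [], _ => simp [occ_nil_right, hlen]
    | [b], _ => rw [occ_singleton_eq, occ_singleton_eq v, hpair, hpair, hhead]
    | [a, b], _ => exact hpair a b

lemma occ_pair_eq_of_head_eq {u v : List Bool} (hlen : u.length = v.length)
    (hhead : u.head? = v.head?) (h00 : occ u [false, false] = occ v [false, false])
    (h11 : occ u [true, true] = occ v [true, true]) (a b : Bool) :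
    occ u [a, b] = occ v [a, b] := by
  rcases u with _ | ⟨c, u⟩
  · rw [List.eq_nil_of_length_eq_zero hlen.symm]
  obtain ⟨v, rfl⟩ : ∃ w, v = c :: w := by
    rcases v with _ | ⟨d, v⟩ <;> simp_all
  have hu := occ_pairs_add_one c u
  have hv := occ_pairs_add_one c v
  have au := occ_changes_alternate c u
  have av := occ_changes_alternate c v
  simp only [List.length_cons] at hlen hu hv
  cases a <;> cases b <;> cases c <;> simp only [Bool.not_false, Bool.not_true] at au av <;> omega

theorem stmt0 (u v : List Bool) :
    KAbEq 2 u v ↔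
      u.length = v.length ∧
      occ u [false, false] = occ v [false, false] ∧
      occ u [true, true] = occ v [true, true] ∧
      u.head? = v.head? := by
  rw [kAbEq_two_iff]
  constructor
  · rintro ⟨hlen, hhead, hpair⟩
    exact ⟨hlen, hpair _ _, hpair _ _, hhead⟩
  · rintro ⟨hlen, h00, h11, hhead⟩
    exact ⟨hlen, hhead, occ_pair_eq_of_head_eq hlen hhead h00 h11⟩
end

section
/- Let τ be the Thue–Morse morphism on {0,1}* defined by τ(0) = 01, τ(1) = 10. In the image τ(w) of any word w, between any two occurrences of the factor 00 there is an occurrence of the factor 11, and between any two occurrences of 11 there is an occurrence of 00. Consequently, for any factor u of τ(w), the numbers |u|_{00} and |u|_{11} differ by at most one. -/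
/-- The Thue–Morse morphism `0 ↦ 01`, `1 ↦ 10`. -/
def tauM : List Bool → List Bool :=
  fun w => w.flatMap (fun a => if a then [true, false] else [false, true])

/-!
In `τ(w) = w₀ w̄₀ w₁ w̄₁ ⋯` a square `xx` can only straddle two consecutive blocks, at position
`2m + 1`, and it does so exactly when `w_m = x̄` and `w_{m+1} = x`. Between two such squares, at
`2m + 1 < 2n + 1`, the word `w` goes from `x` (at `m + 1`) to `x̄` (at `n`), so it switches from `x`
to `x̄` somewhere in between, and that switch is a square `x̄x̄`. This alternation passes to every
factor, and two finite sets of positions that alternate in this way differ in size by at most one.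
-/

open Finset

def OccSeparatedBy {α : Type*} (l p q : List α) : Prop :=
  ∀ i j, i < j → p <+: l.drop i → p <+: l.drop j → ∃ k, i < k ∧ k < j ∧ q <+: l.drop k

theorem Nat.exists_between_and_not_succ {P : ℕ → Prop} {a b : ℕ} (hab : a ≤ b) (ha : P a)
    (hb : ¬P b) :
    ∃ p, a ≤ p ∧ p < b ∧ P p ∧ ¬P (p + 1) := by
  induction b, hab using Nat.le_induction with
  | base => exact absurd ha hb
  | succ b hab ih =>
    by_cases h : P b
    · exact ⟨b, hab, b.lt_succ_self, h, hb⟩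
    · obtain ⟨p, hap, hpb, hp, hp'⟩ := ih h
      exact ⟨p, hap, hpb.trans b.lt_succ_self, hp, hp'⟩

namespace List

theorem pair_prefix_drop_iff {α : Type*} (l : List α) (a b : α) (i : ℕ) :
    [a, b] <+: l.drop i ↔ l[i]? = some a ∧ l[i + 1]? = some b := by
  rw [prefix_iff_getElem?]
  constructor
  · intro h
    simpa [add_comm] using And.intro (h 0 (by simp)) (h 1 (by simp))
  · rintro ⟨ha, hb⟩ (_ | _ | k) hk
    · simpa using ha
    · simpa [add_comm] using hb
    · simp at hk

theorem prefix_append_iff_of_length_le {α : Type*} {p l₁ : List α} (l₂ : List α)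
    (h : p.length ≤ l₁.length) : p <+: l₁ ++ l₂ ↔ p <+: l₁ := by
  rw [prefix_iff_eq_take, prefix_iff_eq_take, take_append_of_le_length h]

theorem exists_getElem?_eq_and_succ_eq_not (w : List Bool) {x : Bool} {a b : ℕ} (hab : a ≤ b)
    (ha : w[a]? = some x) (hb : w[b]? = some !x) :
    ∃ p, a ≤ p ∧ p < b ∧ w[p]? = some x ∧ w[p + 1]? = some !x := by
  obtain ⟨p, hap, hpb, hp, hp'⟩ :=
    Nat.exists_between_and_not_succ (P := fun n => w[n]? ≠ some !x) hab
      (by cases x <;> simp_all) (by simpa)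
  refine ⟨p, hap, hpb, ?_, not_not.1 hp'⟩
  have hlen : p < w.length := by
    have := (getElem?_eq_some_iff.1 (not_not.1 hp')).1; omega
  rw [getElem?_eq_getElem hlen] at hp ⊢
  cases x <;> simp_all

end List

namespace Finset

theorem card_le_card_add_one_of_exists_between {α : Type*} [LinearOrder α] {A B : Finset α}
    (h : ∀ a ∈ A, ∀ a' ∈ A, a < a' → ∃ b ∈ B, a < b ∧ b < a') : #A ≤ #B + 1 := by
  induction A using Finset.induction_on_max generalizing B with
  | empty => simp
  | insert a s hs ih =>
    rcases s.eq_empty_or_nonempty with rfl | hne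
    · simp
    set m := s.max' hne
    obtain ⟨b, hb, hmb, -⟩ :=
      h m (mem_insert_of_mem (s.max'_mem hne)) a (mem_insert_self a s) (hs m (s.max'_mem hne))
    have ih_below : #s ≤ #(B.filter (· < m)) + 1 := by
      refine ih fun c hc c' hc' hcc' => ?_
      obtain ⟨d, hd, hcd, hdc'⟩ := h c (mem_insert_of_mem hc) c' (mem_insert_of_mem hc') hcc'
      exact ⟨d, mem_filter.2 ⟨hd, hdc'.trans_le (s.le_max' c' hc')⟩, hcd, hdc'⟩
    have hlt : #(B.filter (· < m)) < #B := card_lt_card (filter_ssubset.2 ⟨b, hb, hmb.not_gt⟩)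
    rw [card_insert_of_notMem fun ha => (hs a ha).false]
    omega

end Finset

theorem occ_eq_card_filter {α : Type*} [DecidableEq α] (u x : List α) :
    occ u x = #((range (u.length + 1)).filter (fun i => x <+: u.drop i)) := rfl

namespace OccSeparatedBy

variable {α : Type*} {l u p q : List α}

theorem of_isInfix (h : OccSeparatedBy l p q) (hu : u <:+: l) (hqp : q.length ≤ p.length) :
    OccSeparatedBy u p q := by
  -- the empty word occurs at every position, so nothing separates its occurrences at `0` and `1`
  have hp : p ≠ [] := by
    rintro rfl
    obtain ⟨k, h0k, hk1, -⟩ := h 0 1 one_pos List.nil_prefix List.nil_prefix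
    omega
  obtain ⟨s, t, rfl⟩ := hu
  have shift : ∀ {r : List α} {k : ℕ}, k + r.length ≤ u.length →
      (r <+: u.drop k ↔ r <+: (s ++ u ++ t).drop (s.length + k)) := by
    intro r k hk
    rw [List.append_assoc, ← List.drop_drop, List.drop_left,
      List.drop_append_of_le_length (by omega),
      List.prefix_append_iff_of_length_le _ (by rw [List.length_drop]; omega)]
  intro i j hij hi hj
  have hj_len : j + p.length ≤ u.length := by
    have hlen := hj.length_le
    rw [List.length_drop] at hlen
    have := List.length_pos_iff.2 hp
    omega
  obtain ⟨k, hik, hkj, hk⟩ :=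
    h _ _ (Nat.add_lt_add_left hij _) ((shift (by omega)).1 hi) ((shift hj_len).1 hj)
  refine ⟨k - s.length, by omega, by omega, (shift (by omega)).2 ?_⟩
  rwa [Nat.add_sub_cancel' (by omega)]

theorem occ_le [DecidableEq α] (h : OccSeparatedBy u p q) : occ u p ≤ occ u q + 1 := by
  rw [occ_eq_card_filter, occ_eq_card_filter]
  refine card_le_card_add_one_of_exists_between fun a ha a' ha' haa' => ?_
  simp only [mem_filter, mem_range] at ha ha'
  obtain ⟨k, hak, hka', hk⟩ := h a a' haa' ha.2 ha'.2
  exact ⟨k, mem_filter.2 ⟨mem_range.2 (by omega), hk⟩, hak, hka'⟩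

end OccSeparatedBy

theorem getElem?_tauM_two_mul (w : List Bool) (m : ℕ) : (tauM w)[2 * m]? = w[m]? := by
  induction w generalizing m with
  | nil => simp [tauM]
  | cons a w ih => cases m <;> cases a <;> simp_all [tauM, Nat.mul_succ]

theorem getElem?_tauM_two_mul_add_one (w : List Bool) (m : ℕ) :
    (tauM w)[2 * m + 1]? = w[m]?.map (!·) := by
  induction w generalizing m with
  | nil => simp [tauM]
  | cons a w ih => cases m <;> cases a <;> simp_all [tauM, Nat.mul_succ]

theorem pair_prefix_drop_tauM_iff (w : List Bool) (x : Bool) (i : ℕ) :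
    [x, x] <+: (tauM w).drop i ↔
      ∃ m, i = 2 * m + 1 ∧ w[m]? = some !x ∧ w[m + 1]? = some x := by
  rw [List.pair_prefix_drop_iff]
  obtain ⟨m, rfl | rfl⟩ := Nat.even_or_odd' i
  · rw [getElem?_tauM_two_mul, getElem?_tauM_two_mul_add_one]
    constructor
    · rintro ⟨h, h'⟩
      simp [h] at h'
    · rintro ⟨n, hn, -⟩
      omega
  · rw [getElem?_tauM_two_mul_add_one, show 2 * m + 1 + 1 = 2 * (m + 1) by ring,
      getElem?_tauM_two_mul]
    constructor
    · rintro ⟨h, h'⟩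
      exact ⟨m, rfl, by simpa [Option.map_eq_some_iff] using h, h'⟩
    · rintro ⟨n, hn, h, h'⟩
      obtain rfl : n = m := by omega
      simp [h, h']

theorem occSeparatedBy_tauM (w : List Bool) (x : Bool) :
    OccSeparatedBy (tauM w) [x, x] [!x, !x] := by
  intro i j hij hi hj
  obtain ⟨m, rfl, -, hm⟩ := (pair_prefix_drop_tauM_iff w x i).1 hi
  obtain ⟨n, rfl, hn, -⟩ := (pair_prefix_drop_tauM_iff w x j).1 hj
  obtain ⟨p, hmp, hpn, hp, hp'⟩ := w.exists_getElem?_eq_and_succ_eq_not (by omega) hm hn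
  exact ⟨2 * p + 1, by omega, by omega,
    (pair_prefix_drop_tauM_iff w (!x) _).2 ⟨p, rfl, by simpa, hp'⟩⟩

theorem stmt3 (w : List Bool) :
    (∀ i j : ℕ, i < j →
      [false, false] <+: (tauM w).drop i → [false, false] <+: (tauM w).drop j →
      ∃ l, i < l ∧ l < j ∧ [true, true] <+: (tauM w).drop l) ∧
    (∀ i j : ℕ, i < j →
      [true, true] <+: (tauM w).drop i → [true, true] <+: (tauM w).drop j →
      ∃ l, i < l ∧ l < j ∧ [false, false] <+: (tauM w).drop l) ∧
    (∀ u : List Bool, u <:+: tauM w →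
      |(occ u [false, false] : ℤ) - (occ u [true, true] : ℤ)| ≤ 1) := by
  have h₀₀ : OccSeparatedBy (tauM w) [false, false] [true, true] := occSeparatedBy_tauM w false
  have h₁₁ : OccSeparatedBy (tauM w) [true, true] [false, false] := occSeparatedBy_tauM w true
  refine ⟨h₀₀, h₁₁, fun u hu => ?_⟩
  have := (h₀₀.of_isInfix hu le_rfl).occ_le
  have := (h₁₁.of_isInfix hu le_rfl).occ_le
  rw [abs_le]
  omega
end

section
/- For the Thue–Morse word T, the 2-Abelian complexity satisfies ρ^{(2)}_T(2^m + 1) ≤ 8 for all m ≥ 0, and ρ^{(2)}_T(n) = O(log n). -/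
/-!
Write `d(i, n)` for the number of letter changes in `T[i, i + n)`. A binary factor is determined
up to 2-Abelian equivalence by its length, its last letter and its numbers of factors `00`, `01`,
`10`, `11`; by telescoping, `#01` and `#10` are fixed by the two end letters and the number of
changes. Since every block `T(2k)T(2k+1)` is `01` or `10`, the factors `00` and `11` of
`T[i, i + n]` are the factors `10` and `01` of `T[⌊i/2⌋, ⌊(i + n)/2⌋]`, and the numbers of changes
of these two words add up to `n`. Hence the class of `T[i, i + n]` depends only on `T i`,
`T ⌊i/2⌋` and `d(i, n)`, so `ρ(n + 1) ≤ 4 · #{d(i, n) | i}`. The same identity shows by induction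
that `d(·, 2^m)` takes at most two consecutive values, and that `d(·, n)` varies by at most
`log₂ n + 1`.
-/

def countIco (P : ℕ → Bool) (a b : ℕ) : ℕ := (List.range' a (b - a)).countP P

lemma countIco_of_le (P : ℕ → Bool) {a b : ℕ} (h : b ≤ a) : countIco P a b = 0 := by
  simp [countIco, Nat.sub_eq_zero_of_le h]

lemma countIco_succ_right (P : ℕ → Bool) {a b : ℕ} (h : a ≤ b) :
    countIco P a (b + 1) = countIco P a b + (P b).toNat := by
  rw [countIco, countIco, show b + 1 - a = b - a + 1 by omega, List.range'_1_concat,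
    List.countP_append, show a + (b - a) = b by omega]
  rcases hb : P b <;> simp [hb]

lemma countIco_le_sub (P : ℕ → Bool) (a b : ℕ) : countIco P a b ≤ b - a := by
  simpa [countIco] using List.countP_le_length (l := List.range' a (b - a)) (p := P)

lemma countIco_true (a b : ℕ) : countIco (fun _ => true) a b = b - a := by
  simp [countIco]

lemma countIco_false (a b : ℕ) : countIco (fun _ => false) a b = 0 := by
  simp [countIco]

lemma countIco_add_eq_countP_range (P : ℕ → Bool) (a n : ℕ) :
    countIco P a (a + n) = (List.range n).countP (fun j => P (a + j)) := by
  rw [countIco, Nat.add_sub_cancel_left, List.range'_eq_map_range, List.countP_map]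
  rfl

lemma countIco_add_countIco {P Q R : ℕ → Bool} (h : ∀ p, (P p).toNat + (Q p).toNat = (R p).toNat)
    (a b : ℕ) : countIco P a b + countIco Q a b = countIco R a b := by
  unfold countIco
  induction List.range' a (b - a) with
  | nil => rfl
  | cons p l ih =>
    have hp := h p
    simp only [List.countP_cons]
    rcases hP : P p <;> rcases hQ : Q p <;> rcases hR : R p <;> simp [hP, hQ, hR] at hp ⊢ <;> omega

lemma countIco_not_add (P : ℕ → Bool) (a b : ℕ) :
    countIco (fun p => !P p) a b + countIco P a b = b - a := by
  rw [countIco_add_countIco (R := fun _ => true) (fun p => by cases P p <;> rfl), countIco_true]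

lemma countIco_even_add_odd (P : ℕ → Bool) (a b : ℕ) :
    countIco (fun k => P (2 * k)) ((a + 1) / 2) ((b + 1) / 2)
      + countIco (fun k => P (2 * k + 1)) (a / 2) (b / 2) = countIco P a b := by
  rcases le_or_gt a b with h | h
  · induction b, h using Nat.le_induction with
    | base => simp [countIco_of_le]
    | succ b hb ih =>
      rw [countIco_succ_right _ hb, ← ih]
      rcases Nat.even_or_odd' b with ⟨c, rfl | rfl⟩
      · rw [show (2 * c + 1 + 1) / 2 = c + 1 by omega, show (2 * c + 1) / 2 = c by omega,
          countIco_succ_right _ (by omega), show 2 * c / 2 = c by omega]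
        omega
      · rw [show (2 * c + 1 + 1 + 1) / 2 = c + 1 by omega,
          show (2 * c + 1 + 1) / 2 = c + 1 by omega, countIco_succ_right _ (by omega : a / 2 ≤ c), show (2 * c + 1) / 2 = c by omega]
        omega
  · rw [countIco_of_le _ h.le, countIco_of_le, countIco_of_le] <;> omega

lemma countP_range_lt_and {K N : ℕ} (Q : ℕ → Bool) (hK : K ≤ N) :
    (List.range N).countP (fun j => decide (j < K) && Q j) = (List.range K).countP Q := by
  obtain ⟨r, rfl⟩ := Nat.exists_eq_add_of_le hK
  have below : (List.range K).countP (fun j => decide (j < K) && Q j) = (List.range K).countP Q :=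
    List.countP_congr (fun j hj => by simp_all)
  have above : (List.range r).countP ((fun j => decide (j < K) && Q j) ∘ (K + ·)) = 0 :=
    List.countP_eq_zero.2 (by simp)
  rw [List.range_add, List.countP_append, List.countP_map, below, above, Nat.add_zero]

section Factors

variable {α : Type*}

lemma length_factorAt (w : ℕ → α) (i n : ℕ) : (factorAt w i n).length = n := by
  simp [factorAt]

lemma take_factorAt (w : ℕ → α) (i k n : ℕ) :
    (factorAt w i n).take k = factorAt w i (min k n) := by
  rw [factorAt, factorAt, ← List.map_take, List.take_range]

lemma drop_factorAt (w : ℕ → α) (i k n : ℕ) :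
    (factorAt w i n).drop k = factorAt w (i + k) (n - k) := by
  apply List.ext_getElem (by simp [factorAt])
  intro j _ _
  simp [factorAt, Nat.add_assoc]

lemma prefix_factorAt_iff (w : ℕ → α) (i n : ℕ) (v : List α) :
    v <+: factorAt w i n ↔ v.length ≤ n ∧ factorAt w i v.length = v := by
  rw [List.prefix_iff_eq_take, take_factorAt]
  constructor
  · intro h
    have hlen : v.length ≤ n := by
      have := congrArg List.length h
      rw [length_factorAt] at this
      omega
    rw [min_eq_left hlen] at h
    exact ⟨hlen, h.symm⟩
  · rintro ⟨hlen, h⟩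
    rw [min_eq_left hlen, h]

lemma occ_factorAt [DecidableEq α] (w : ℕ → α) (i n : ℕ) (v : List α) :
    occ (factorAt w i n) v
      = countIco (fun p => decide (factorAt w p v.length = v)) i (i + (n + 1 - v.length)) := by
  rw [occ, ← List.countP_eq_length_filter, countIco_add_eq_countP_range, length_factorAt,
    ← countP_range_lt_and _ (Nat.sub_le (n + 1) v.length)]
  refine List.countP_congr (fun j hj => ?_)
  rw [List.mem_range] at hj
  simp only [drop_factorAt, prefix_factorAt_iff, decide_eq_true_eq, Bool.and_eq_true]
  constructor <;> rintro ⟨h1, h2⟩ <;> exact ⟨by omega, h2⟩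

end Factors

section BinaryWords

variable (w : ℕ → Bool)

def pairCount (x y : Bool) (a b : ℕ) : ℕ := countIco (fun p => w p == x && w (p + 1) == y) a b

def changeCount (a b : ℕ) : ℕ := countIco (fun p => w p != w (p + 1)) a b

lemma pairCount_add_pairCount (x : Bool) (a b : ℕ) :
    pairCount w x false a b + pairCount w x true a b = countIco (fun p => w p == x) a b :=
  countIco_add_countIco (fun p => by cases w p <;> cases w (p + 1) <;> cases x <;> rfl) a b

lemma changeCount_eq_pairCount_add_pairCount (a b : ℕ) :
    changeCount w a b = pairCount w true false a b + pairCount w false true a b :=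
  (countIco_add_countIco (fun p => by cases w p <;> cases w (p + 1) <;> rfl) a b).symm

lemma pairCount_true_false_add_toNat {a b : ℕ} (h : a ≤ b) :
    pairCount w true false a b + (w b).toNat = pairCount w false true a b + (w a).toNat := by
  induction b, h using Nat.le_induction with
  | base => simp [pairCount, countIco_of_le]
  | succ b hb ih =>
    rw [pairCount, pairCount, countIco_succ_right _ hb, countIco_succ_right _ hb]
    rw [pairCount, pairCount] at ih
    rcases hwb : w b <;> rcases w (b + 1) <;> simp [hwb] at ih ⊢ <;> omega

/-- Telescoping gives `#10 - #01 = w a - w b`, while `#10 + #01` is the number of changes. -/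
lemma eq_and_pairCount_eq_of_changeCount_eq {a b a' b' : ℕ} (hab : a ≤ b) (hab' : a' ≤ b')
    (ha : w a = w a') (hc : changeCount w a b = changeCount w a' b') :
    w b = w b' ∧ pairCount w true false a b = pairCount w true false a' b'
      ∧ pairCount w false true a b = pairCount w false true a' b' := by
  have tele := pairCount_true_false_add_toNat w hab
  have tele' := pairCount_true_false_add_toNat w hab'
  rw [changeCount_eq_pairCount_add_pairCount, changeCount_eq_pairCount_add_pairCount] at hc
  rw [ha] at tele
  rcases w a' <;> rcases hb : w b <;> rcases hb' : w b' <;> simp [hb, hb'] at tele tele' ⊢ <;> omega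

lemma occ_factorAt_nil (i n : ℕ) : occ (factorAt w i n) [] = n + 1 := by
  rw [occ_factorAt, List.length_nil, Nat.sub_zero]
  simpa [factorAt] using countIco_true i (i + (n + 1))

lemma occ_factorAt_singleton {i n : ℕ} (hn : 1 ≤ n) (x : Bool) :
    occ (factorAt w i n) [x] = pairCount w x false i (i + (n - 1))
      + pairCount w x true i (i + (n - 1)) + (w (i + (n - 1)) == x).toNat := by
  rw [occ_factorAt, pairCount_add_pairCount, ← countIco_succ_right _ (Nat.le_add_right _ _)]
  congr 1
  · funext p
    simp [factorAt, Bool.beq_eq_decide_eq]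
  · simp only [List.length_singleton]
    omega

lemma occ_factorAt_pair (i n : ℕ) (x y : Bool) :
    occ (factorAt w i n) [x, y] = pairCount w x y i (i + (n - 1)) := by
  rw [occ_factorAt, pairCount]
  congr 1
  funext p
  simp [factorAt, List.range_succ, Bool.beq_eq_decide_eq]

lemma kabEq_two_of_pairCount_eq {i j n : ℕ} (hn : 1 ≤ n)
    (hlast : w (i + (n - 1)) = w (j + (n - 1)))
    (hpair : ∀ x y, pairCount w x y i (i + (n - 1)) = pairCount w x y j (j + (n - 1))) :
    KAbEq 2 (factorAt w i n) (factorAt w j n) := by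
  intro v hv
  match v, hv with
  | [], _ => rw [occ_factorAt_nil, occ_factorAt_nil]
  | [x], _ => rw [occ_factorAt_singleton w hn, occ_factorAt_singleton w hn, hlast, hpair, hpair]
  | [x, y], _ => rw [occ_factorAt_pair, occ_factorAt_pair, hpair]

end BinaryWords

lemma Set.ncard_range_le_card_of_factorsThrough {ι β γ : Type*} {f : ι → γ} {g : ι → β}
    (hfg : f.FactorsThrough g) (F : Finset β) (hg : ∀ i, g i ∈ F) :
    (Set.range f).ncard ≤ F.card := by
  rcases isEmpty_or_nonempty ι with hι | ⟨⟨i₀⟩⟩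
  · simp [Set.range_eq_empty]
  have hsub : Set.range g ⊆ F := Set.range_subset_iff.2 hg
  rw [← hfg.extend_comp (fun _ => f i₀), Set.range_comp]
  calc _ ≤ (Set.range g).ncard := Set.ncard_image_le (F.finite_toSet.subset hsub)
    _ ≤ (F : Set β).ncard := Set.ncard_le_ncard hsub F.finite_toSet
    _ = F.card := Set.ncard_coe_finset F

lemma rho_le_card {α β : Type*} [DecidableEq α] (k : ℕ) (w : ℕ → α) (n : ℕ) (g : ℕ → β)
    (F : Finset β) (hg : ∀ i, g i ∈ F)
    (hkab : ∀ i j, g i = g j → KAbEq k (factorAt w i n) (factorAt w j n)) :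
    rho k w n ≤ F.card := by
  let cls : ℕ → Set (List α) := fun i =>
    { v | (∃ j : ℕ, v = factorAt w j n) ∧ KAbEq k v (factorAt w i n) }
  have hrange : { C | ∃ i, C = cls i } = Set.range cls := by
    ext C
    exact exists_congr fun i => eq_comm
  rw [rho, hrange]
  refine Set.ncard_range_le_card_of_factorsThrough (fun i j hij => ?_) F hg
  ext v
  exact and_congr_right fun _ => forall₂_congr fun x hx => by rw [hkab i j hij x hx]

section ThueMorse

variable {T : ℕ → Bool}

lemma pairCount_self_eq_half (hTe : ∀ n, T (2 * n) = T n) (hTo : ∀ n, T (2 * n + 1) = !T n)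
    (x : Bool) (a b : ℕ) : pairCount T x x a b = pairCount T (!x) x (a / 2) (b / 2) := by
  have even : ∀ k, (T (2 * k) == x && T (2 * k + 1) == x) = false := by
    intro k; rw [hTe, hTo]; cases T k <;> cases x <;> rfl
  have odd : ∀ k, (T (2 * k + 1) == x && T (2 * k + 1 + 1) == x)
      = (T k == !x && T (k + 1) == x) := by
    intro k
    have next : T (2 * k + 1 + 1) = T (k + 1) := hTe (k + 1)
    rw [hTo, next]
    cases T k <;> cases T (k + 1) <;> cases x <;> rfl
  rw [pairCount, ← countIco_even_add_odd]
  simp only [even, odd, countIco_false, Nat.zero_add]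
  rfl

/-- Each block `T(2k)T(2k+1)` is a change, and `T(2k+1)T(2k+2)` is a change iff `T k T (k+1)`
is not. -/
lemma changeCount_add_changeCount_half (hTe : ∀ n, T (2 * n) = T n)
    (hTo : ∀ n, T (2 * n + 1) = !T n) (a b : ℕ) :
    changeCount T a b + changeCount T (a / 2) (b / 2) = b - a := by
  have even : ∀ k, (T (2 * k) != T (2 * k + 1)) = true := by
    intro k; rw [hTe, hTo]; cases T k <;> rfl
  have odd : ∀ k, (T (2 * k + 1) != T (2 * k + 1 + 1)) = !(T k != T (k + 1)) := by
    intro k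
    have next : T (2 * k + 1 + 1) = T (k + 1) := hTe (k + 1)
    rw [hTo, next]
    cases T k <;> cases T (k + 1) <;> rfl
  have odd_add := countIco_not_add (fun k => T k != T (k + 1)) (a / 2) (b / 2)
  unfold changeCount
  rw [← countIco_even_add_odd]
  simp only [even, odd, countIco_true]
  omega

lemma kabEq_two_of_changeCount_eq (hTe : ∀ n, T (2 * n) = T n)
    (hTo : ∀ n, T (2 * n + 1) = !T n) {i j n : ℕ} (hn : 1 ≤ n) (hfirst : T i = T j)
    (hhalf : T (i / 2) = T (j / 2))
    (hc : changeCount T i (i + (n - 1)) = changeCount T j (j + (n - 1))) :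
    KAbEq 2 (factorAt T i n) (factorAt T j n) := by
  obtain ⟨hlast, h10, h01⟩ := eq_and_pairCount_eq_of_changeCount_eq T
    (Nat.le_add_right i _) (Nat.le_add_right j _) hfirst hc
  have hc_half : changeCount T (i / 2) ((i + (n - 1)) / 2)
      = changeCount T (j / 2) ((j + (n - 1)) / 2) := by
    have := changeCount_add_changeCount_half hTe hTo i (i + (n - 1))
    have := changeCount_add_changeCount_half hTe hTo j (j + (n - 1))
    omega
  obtain ⟨-, h10_half, h01_half⟩ := eq_and_pairCount_eq_of_changeCount_eq T
    (Nat.div_le_div_right (Nat.le_add_right i _)) (Nat.div_le_div_right (Nat.le_add_right j _))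
    hhalf hc_half
  refine kabEq_two_of_pairCount_eq T hn hlast ?_
  rintro (_ | _) (_ | _)
  · rw [pairCount_self_eq_half hTe hTo, pairCount_self_eq_half hTe hTo, Bool.not_false, h10_half]
  · exact h01
  · exact h10
  · rw [pairCount_self_eq_half hTe hTo, pairCount_self_eq_half hTe hTo, Bool.not_true, h01_half]

lemma changeCount_le_changeCount_add_log (hTe : ∀ n, T (2 * n) = T n)
    (hTo : ∀ n, T (2 * n + 1) = !T n) (L a b : ℕ) :
    changeCount T a (a + L) ≤ changeCount T b (b + L) + Nat.log 2 L + 1 := by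
  induction L using Nat.strong_induction_on generalizing a b with
  | _ L ih =>
  rcases lt_or_ge L 2 with hL | hL
  · have := countIco_le_sub (fun p => T p != T (p + 1)) a (a + L)
    unfold changeCount
    omega
  have half_window : ∀ c, changeCount T c (c + L) + changeCount T (c / 2) (c / 2 + L / 2) ≤ L
      ∧ L ≤ changeCount T c (c + L) + changeCount T (c / 2) (c / 2 + L / 2) + 1 := by
    intro c
    have hc := changeCount_add_changeCount_half hTe hTo c (c + L)
    have step := countIco_succ_right (fun p => T p != T (p + 1)) (Nat.le_add_right (c / 2) (L / 2))
    have := Bool.toNat_le (T (c / 2 + L / 2) != T (c / 2 + L / 2 + 1))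
    unfold changeCount at *
    rcases (show (c + L) / 2 = c / 2 + L / 2 ∨ (c + L) / 2 = c / 2 + L / 2 + 1 by omega)
      with e | e <;> rw [e] at hc <;> omega
  have ha := half_window a
  have hb := half_window b
  have ih_half := ih (L / 2) (by omega) (b / 2) (a / 2)
  have hlog : Nat.log 2 (L / 2) + 1 = Nat.log 2 L := by
    rw [Nat.log_div_base]
    have := Nat.log_pos (b := 2) (by norm_num) hL
    omega
  omega

lemma exists_changeCount_two_pow_mem_Icc (hTe : ∀ n, T (2 * n) = T n)
    (hTo : ∀ n, T (2 * n + 1) = !T n) (m : ℕ) :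
    ∃ c, ∀ a, changeCount T a (a + 2 ^ m) ∈ Finset.Icc c (c + 1) := by
  induction m with
  | zero =>
    refine ⟨0, fun a => ?_⟩
    have := countIco_le_sub (fun p => T p != T (p + 1)) a (a + 2 ^ 0)
    simp only [changeCount, Finset.mem_Icc] at this ⊢
    omega
  | succ m ih =>
    obtain ⟨c, hc⟩ := ih
    refine ⟨2 ^ (m + 1) - (c + 1), fun a => ?_⟩
    have hsum := changeCount_add_changeCount_half hTe hTo a (a + 2 ^ (m + 1))
    have hpow : 2 ^ (m + 1) = 2 * 2 ^ m := by ring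
    rw [show (a + 2 ^ (m + 1)) / 2 = a / 2 + 2 ^ m by omega] at hsum
    have hhalf := Finset.mem_Icc.1 (hc (a / 2))
    have := countIco_le_sub (fun p => T p != T (p + 1)) (a / 2) (a / 2 + 2 ^ m)
    rw [Finset.mem_Icc]
    unfold changeCount at *
    omega

lemma rho_two_le_four_mul_card (hTe : ∀ n, T (2 * n) = T n) (hTo : ∀ n, T (2 * n + 1) = !T n)
    {n : ℕ} (hn : 1 ≤ n) (S : Finset ℕ) (hS : ∀ i, changeCount T i (i + (n - 1)) ∈ S) :
    rho 2 T n ≤ 4 * S.card := by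
  calc rho 2 T n ≤ (S ×ˢ (Finset.univ : Finset Bool) ×ˢ (Finset.univ : Finset Bool)).card :=
        rho_le_card 2 T n (fun i => (changeCount T i (i + (n - 1)), T i, T (i / 2))) _
          (fun i => by simp [hS])
          (fun i j hij => by
            simp only [Prod.mk.injEq] at hij
            exact kabEq_two_of_changeCount_eq hTe hTo hn hij.2.1 hij.2.2 hij.1)
    _ = 4 * S.card := by simp [Finset.card_product, mul_comm]

lemma rho_two_two_pow_add_one_le (hTe : ∀ n, T (2 * n) = T n)
    (hTo : ∀ n, T (2 * n + 1) = !T n) (m : ℕ) : rho 2 T (2 ^ m + 1) ≤ 8 := by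
  obtain ⟨c, hc⟩ := exists_changeCount_two_pow_mem_Icc hTe hTo m
  calc rho 2 T (2 ^ m + 1) ≤ 4 * (Finset.Icc c (c + 1)).card :=
        rho_two_le_four_mul_card hTe hTo (Nat.le_add_left 1 _) _ (by simpa using hc)
    _ = 8 := by rw [Nat.card_Icc]; omega

lemma rho_two_le_log (hTe : ∀ n, T (2 * n) = T n) (hTo : ∀ n, T (2 * n + 1) = !T n)
    {n : ℕ} (hn : 1 ≤ n) : rho 2 T n ≤ 8 * Nat.log 2 n + 12 := by
  set d := changeCount T 0 (0 + (n - 1))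
  set r := Nat.log 2 (n - 1) + 1
  have hS : ∀ i, changeCount T i (i + (n - 1)) ∈ Finset.Icc (d - r) (d + r) := by
    intro i
    have := changeCount_le_changeCount_add_log hTe hTo (n - 1) i 0
    have := changeCount_le_changeCount_add_log hTe hTo (n - 1) 0 i
    rw [Finset.mem_Icc]
    omega
  have hlog : Nat.log 2 (n - 1) ≤ Nat.log 2 n := Nat.log_mono_right (Nat.sub_le n 1)
  calc rho 2 T n ≤ 4 * (Finset.Icc (d - r) (d + r)).card := rho_two_le_four_mul_card hTe hTo hn _ hS
    _ ≤ 8 * Nat.log 2 n + 12 := by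
      rw [Nat.card_Icc]
      omega

end ThueMorse

lemma natLog_two_le_logb_two_add_one (n : ℕ) :
    (Nat.log 2 n : ℝ) ≤ Real.logb 2 (n + 1) :=
  (Real.natLog_le_logb n 2).trans <| by
    rcases Nat.eq_zero_or_pos n with rfl | hn
    · simp
    · exact Real.logb_le_logb_of_le (by norm_num) (by positivity) (by linarith)

theorem stmt13_general (T : ℕ → Bool)
    (hTe : ∀ n, T (2 * n) = T n) (hTo : ∀ n, T (2 * n + 1) = !T n) :
    (∀ m : ℕ, rho 2 T (2 ^ m + 1) ≤ 8) ∧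
    (∃ C : ℝ, ∀ n : ℕ, 1 ≤ n → (rho 2 T n : ℝ) ≤ C * Real.log (n + 1)) := by
  refine ⟨rho_two_two_pow_add_one_le hTe hTo, 20 / Real.log 2, fun n hn => ?_⟩
  have hone : 1 ≤ Real.logb 2 (n + 1) := by
    rw [Real.le_logb_iff_rpow_le (by norm_num) (by positivity), Real.rpow_one]
    exact_mod_cast Nat.succ_le_succ hn
  calc (rho 2 T n : ℝ) ≤ 8 * Nat.log 2 n + 12 := by exact_mod_cast rho_two_le_log hTe hTo hn
    _ ≤ 20 * Real.logb 2 (n + 1) := by linarith [natLog_two_le_logb_two_add_one n]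
    _ = 20 / Real.log 2 * Real.log (n + 1) := by rw [Real.logb]; ring

theorem stmt13 (T : ℕ → Bool)
    (hT0 : T 0 = false) (hTe : ∀ n, T (2 * n) = T n) (hTo : ∀ n, T (2 * n + 1) = !T n) :
    (∀ m : ℕ, rho 2 T (2 ^ m + 1) ≤ 8) ∧
    (∃ C : ℝ, ∀ n : ℕ, 1 ≤ n → (rho 2 T n : ℝ) ≤ C * Real.log (n + 1)) :=
  stmt13_general T hTe hTo
end

section
/- Let n_1, n_2, … be a sequence of integers each greater than 1, set m_0 = 1 and m_j = n_1⋯n_j, and define U = a_1 a_2 a_3 … by a_i = 0 if the largest j with m_j | i is even and a_i = 1 otherwise. Then U is uniformly recurrent: for every factor u of U there is an N such that every factor of U of length N contains u. -/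
/-!
Let `M = m J` and `M ∤ a`. Then `m j ∣ a + k * M ↔ m j ∣ a` for every `j`: for `j ≤ J` because
`m j ∣ M`, and for `j > J` both sides fail because `M ∣ m j`. So the set of levels of `p + 1`, and
with it the letter at `p`, is `M`-periodic along positions `p` with `M ∤ p + 1`. Since `m J > J`,
taking `J = i + n` makes the whole factor of length `n` at `i` `M`-periodic, hence it
occurs in every window of length `i + M + n`.
-/

lemma factorAt_congr {α : Type*} {w : ℕ → α} {a b n : ℕ}
    (h : ∀ j < n, w (a + j) = w (b + j)) : factorAt w a n = factorAt w b n :=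
  List.map_congr_left fun j hj => h j (List.mem_range.mp hj)

lemma exists_factorAt_eq_in_window {α : Type*} {w : ℕ → α} {i n M : ℕ} (hM : 0 < M)
    (hper : ∀ k, factorAt w (i + k * M) n = factorAt w i n) (l : ℕ) :
    ∃ d, d + n ≤ i + M + n ∧ factorAt w (l + d) n = factorAt w i n := by
  have hdiv := Nat.div_add_mod l M
  have hmod := Nat.mod_lt l hM
  have hk : (l / M + 1) * M = M * (l / M) + M := by ring
  refine ⟨i + (l / M + 1) * M - l, by omega, ?_⟩
  rw [show l + (i + (l / M + 1) * M - l) = i + (l / M + 1) * M by omega]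
  exact hper _

lemma dvd_of_le_of_dvd_succ {m : ℕ → ℕ} (hchain : ∀ j, m j ∣ m (j + 1)) {j J : ℕ} (h : j ≤ J) :
    m j ∣ m J := by
  induction J, h using Nat.le_induction with
  | base => exact dvd_rfl
  | succ J _ ih => exact ih.trans (hchain J)

lemma dvd_add_mul_iff_of_not_dvd {m : ℕ → ℕ} (hchain : ∀ j, m j ∣ m (j + 1)) {J a : ℕ}
    (ha : ¬ m J ∣ a) (j k : ℕ) : m j ∣ a + k * m J ↔ m j ∣ a := by
  rcases le_or_gt j J with hj | hj
  · exact Nat.dvd_add_left ((dvd_of_le_of_dvd_succ hchain hj).mul_left k)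
  · have hJj := dvd_of_le_of_dvd_succ hchain hj.le
    have hJ : ¬ m J ∣ a + k * m J := by
      rwa [Nat.dvd_add_left (dvd_mul_left _ _)]
    exact ⟨fun h => absurd (hJj.trans h) hJ, fun h => absurd (hJj.trans h) ha⟩

lemma setOf_dvd_add_mul_eq {m : ℕ → ℕ} (hchain : ∀ j, m j ∣ m (j + 1)) {J a : ℕ}
    (ha : ¬ m J ∣ a) (k : ℕ) : { j | m j ∣ a + k * m J } = { j | m j ∣ a } :=
  Set.ext fun j => dvd_add_mul_iff_of_not_dvd hchain ha j k

lemma lt_apply_of_two_le_ratio {f m : ℕ → ℕ} (hf : ∀ j, 1 ≤ j → 2 ≤ f j) (hm0 : m 0 = 1)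
    (hms : ∀ j, m (j + 1) = m j * f (j + 1)) (j : ℕ) : j < m j := by
  induction j with
  | zero => omega
  | succ j ih =>
    have := hf (j + 1) (by omega)
    rw [hms]
    nlinarith

theorem stmt16 (f : ℕ → ℕ) (hf : ∀ j, 1 ≤ j → 2 ≤ f j)
    (m : ℕ → ℕ) (hm0 : m 0 = 1) (hms : ∀ j, m (j + 1) = m j * f (j + 1))
    (U : ℕ → Bool)
    (hU : ∀ i : ℕ, U i = decide (Odd (sSup { j : ℕ | m j ∣ (i + 1) }))) :
    ∀ n i : ℕ, ∃ N : ℕ, n ≤ N ∧ ∀ l : ℕ, ∃ d : ℕ, d + n ≤ N ∧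
      factorAt U (l + d) n = factorAt U i n := by
  have hchain : ∀ j, m j ∣ m (j + 1) := fun j => Dvd.intro _ (hms j).symm
  intro n i
  have hM : i + n < m (i + n) := lt_apply_of_two_le_ratio hf hm0 hms (i + n)
  have hper : ∀ k, factorAt U (i + k * m (i + n)) n = factorAt U i n := fun k =>
    factorAt_congr fun j hj => by
      have hnd : ¬ m (i + n) ∣ i + j + 1 := fun h => by
        have := Nat.le_of_dvd (by omega) h
        omega
      rw [hU, hU, show i + k * m (i + n) + j + 1 = i + j + 1 + k * m (i + n) by ring,
        setOf_dvd_add_mul_eq hchain hnd k]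
  exact ⟨i + m (i + n) + n, by omega, exists_factorAt_eq_in_window (by omega) hper⟩
end

section
/- With U defined from a sequence n_1, n_2, … of integers > 1 as: m_0 = 1, m_j = n_1⋯n_j, a_i = 0 iff the largest j with m_j | i is even, U = a_1 a_2 …; for every n ≥ 1 let n' be the unique index with m_{n'−1} < n ≤ m_{n'}. Then the Abelian complexity satisfies ρ^{(1)}_U(n) ≤ n' + 1, and ρ^{(1)}_U(m_j) = 2 for all j ≥ 1. -/
open Finset

lemma occ_nil {α : Type*} [DecidableEq α] (u : List α) : occ u [] = u.length + 1 := by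
  simp [occ]

lemma occ_singleton {α : Type*} [DecidableEq α] (u : List α) (a : α) :
    occ u [a] = u.count a := by
  induction u with
  | nil => simp [occ]
  | cons b u ih =>
    unfold occ at ih ⊢
    rw [List.count_cons, List.length_cons, List.range_succ_eq_map, List.filter_cons]
    by_cases hab : a = b
    · subst hab
      simp [List.filter_map, List.cons_prefix_cons, ih, Function.comp_def]
    · simp [List.filter_map, List.cons_prefix_cons, ih, hab, Ne.symm hab, Function.comp_def]

lemma kAbEq_one_iff_count_true_eq {u v : List Bool} (h : u.length = v.length) :
    KAbEq 1 u v ↔ u.count true = v.count true := by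
  refine ⟨fun huv => by simpa [occ_singleton] using huv [true] le_rfl, fun hc x hx => ?_⟩
  match x with
  | [] => rw [occ_nil, occ_nil, h]
  | [false] =>
    rw [occ_singleton, occ_singleton]
    have hu := List.count_true_add_count_false u
    have hv := List.count_true_add_count_false v
    omega
  | [true] => rwa [occ_singleton, occ_singleton]
  | _ :: _ :: _ => simp at hx

lemma rho_one_eq_ncard_range_count_true (w : ℕ → Bool) (n : ℕ) :
    rho 1 w n = (Set.range fun p => (factorAt w p n).count true).ncard := by
  set cls : ℕ → Set (List Bool) := fun c => {v | (∃ j, v = factorAt w j n) ∧ v.count true = c}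
  have hcls : ∀ i, {v | (∃ j, v = factorAt w j n) ∧ KAbEq 1 v (factorAt w i n)} =
      cls ((factorAt w i n).count true) := by
    intro i
    ext v
    constructor <;> rintro ⟨⟨j, rfl⟩, h⟩ <;> refine ⟨⟨j, rfl⟩, ?_⟩
    · exact (kAbEq_one_iff_count_true_eq (by simp [factorAt])).1 h
    · exact (kAbEq_one_iff_count_true_eq (by simp [factorAt])).2 h
  have hinj : Set.InjOn cls (Set.range fun p => (factorAt w p n).count true) := by
    rintro _ ⟨i, rfl⟩ _ _ h
    have hi : factorAt w i n ∈ cls ((factorAt w i n).count true) := ⟨⟨i, rfl⟩, rfl⟩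
    rw [h] at hi
    exact hi.2
  rw [rho, ← hinj.ncard_image, ← Set.range_comp]
  congr 1
  ext C
  simp [hcls, eq_comm]

lemma ncard_range_le_of_le_add {ι : Type*} {g : ι → ℕ} {w : ℕ} (h : ∀ p q, g p ≤ g q + w) :
    (Set.range g).ncard ≤ w + 1 := by
  rcases (Set.range g).eq_empty_or_nonempty with hempty | hne
  · simp [hempty]
  obtain ⟨q, hq⟩ := Nat.sInf_mem hne
  calc (Set.range g).ncard ≤ (Set.Icc (g q) (g q + w)).ncard := by
        refine Set.ncard_le_ncard ?_ (Set.finite_Icc _ _)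
        rintro _ ⟨p, rfl⟩
        exact ⟨hq ▸ Nat.sInf_le ⟨p, rfl⟩, h p q⟩
    _ = w + 1 := by simp only [Set.ncard_Icc_nat]; omega

def multiplesIn (c p n : ℕ) : ℕ := #{i ∈ Ioc p (p + n) | c ∣ i}

lemma multiplesIn_eq (c p n : ℕ) : multiplesIn c p n = (p + n) / c - p / c := by
  have hunion : Ioc 0 p ∪ Ioc p (p + n) = Ioc 0 (p + n) :=
    Ioc_union_Ioc_eq_Ioc (Nat.zero_le p) (Nat.le_add_right p n)
  have hdisj : Disjoint (Ioc 0 p) (Ioc p (p + n)) := Ioc_disjoint_Ioc_of_le le_rfl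
  have hcard := card_union_of_disjoint
    (hdisj.mono (filter_subset (fun i : ℕ => c ∣ i) _) (filter_subset (fun i : ℕ => c ∣ i) _))
  rw [← filter_union, hunion, Nat.Ioc_filter_dvd_card_eq_div, Nat.Ioc_filter_dvd_card_eq_div]
    at hcard
  rw [multiplesIn]
  omega

lemma multiplesIn_le_add_one {c : ℕ} (hc : 0 < c) (p q n : ℕ) :
    multiplesIn c p n ≤ multiplesIn c q n + 1 := by
  have hlower : ∀ r, n / c ≤ multiplesIn c r n := fun r => by
    have : r / c + n / c ≤ (r + n) / c := Nat.div_add_div_le_add_div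
    rw [multiplesIn_eq]
    omega
  have hupper : multiplesIn c p n ≤ n / c + 1 := by
    have : (p + n) / c ≤ p / c + n / c + 1 := by
      rw [Nat.add_div hc]
      split <;> omega
    rw [multiplesIn_eq, Nat.sub_le_iff_le_add]
    linarith
  linarith [hlower q]

lemma multiplesIn_of_dvd {c n : ℕ} (h : c ∣ n) (p q : ℕ) :
    multiplesIn c p n = multiplesIn c q n := by
  obtain ⟨k, rfl⟩ := h
  rcases Nat.eq_zero_or_pos c with rfl | hc
  · simp [multiplesIn_eq]
  · simp [multiplesIn_eq, Nat.add_mul_div_left _ _ hc]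

lemma multiplesIn_le_one {c n : ℕ} (hc : 0 < c) (hn : n ≤ c) (p : ℕ) : multiplesIn c p n ≤ 1 := by
  have : (p + n) / c ≤ p / c + 1 :=
    (Nat.div_le_div_right (Nat.add_le_add_left hn p)).trans_eq (Nat.add_div_right p hc)
  rw [multiplesIn_eq]
  omega

noncomputable def level (m : ℕ → ℕ) (i : ℕ) : ℕ := sSup {j | m j ∣ i}

structure IsDivisorChain (m : ℕ → ℕ) : Prop where
  zero : m 0 = 1
  dvd_succ : ∀ j, m j ∣ m (j + 1)
  strictMono : StrictMono m

namespace IsDivisorChain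

variable {m : ℕ → ℕ}

lemma of_mul {f : ℕ → ℕ} (hf : ∀ j, 1 < f (j + 1)) (hm0 : m 0 = 1)
    (hms : ∀ j, m (j + 1) = m j * f (j + 1)) : IsDivisorChain m := by
  have hpos : ∀ j, 0 < m j := by
    intro j
    induction j with
    | zero => omega
    | succ j ih => rw [hms]; exact Nat.mul_pos ih (by linarith [hf j])
  refine ⟨hm0, fun j => ⟨f (j + 1), hms j⟩, strictMono_nat_of_lt_succ fun j => ?_⟩
  rw [hms]
  nlinarith [hpos j, hf j]

lemma pos (hm : IsDivisorChain m) (j : ℕ) : 0 < m j :=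
  (hm.zero ▸ Nat.one_pos : 0 < m 0).trans_le (hm.strictMono.monotone j.zero_le)

lemma dvd_of_le (hm : IsDivisorChain m) {i j : ℕ} (h : i ≤ j) : m i ∣ m j :=
  Nat.rel_of_forall_rel_succ_of_le (· ∣ ·) hm.dvd_succ h

lemma dvd_iff_le_level (hm : IsDivisorChain m) {i : ℕ} (hi : 0 < i) (j : ℕ) :
    m j ∣ i ↔ j ≤ level m i := by
  have hbdd : BddAbove {j | m j ∣ i} :=
    ⟨i, fun j hj => (hm.strictMono.id_le j).trans (Nat.le_of_dvd hi hj)⟩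
  have hmem : m (level m i) ∣ i := Nat.sSup_mem ⟨0, by simp [hm.zero]⟩ hbdd
  exact ⟨fun hj => le_csSup hbdd hj, fun hj => (hm.dvd_of_le hj).trans hmem⟩

lemma level_self (hm : IsDivisorChain m) (j : ℕ) : level m (m j) = j := by
  have hdvd := (hm.dvd_iff_le_level (hm.pos j) (level m (m j))).2 le_rfl
  exact le_antisymm (hm.strictMono.le_iff_le.1 (Nat.le_of_dvd (hm.pos j) hdvd))
    ((hm.dvd_iff_le_level (hm.pos j) j).1 dvd_rfl)

end IsDivisorChain

section LevelParity

variable {m : ℕ → ℕ}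

noncomputable def levelParityCount (m : ℕ → ℕ) (a p n : ℕ) : ℕ :=
  #{i ∈ Ioc p (p + n) | m a ∣ i ∧ Even (level m i + a)}

lemma levelParityCount_add_succ (hm : IsDivisorChain m) (a p n : ℕ) :
    levelParityCount m a p n + levelParityCount m (a + 1) p n = multiplesIn (m a) p n := by
  rw [multiplesIn, ← card_filter_add_card_filter_not (fun i => Even (level m i + a)),
    filter_filter, filter_filter, levelParityCount, levelParityCount]
  congr 2
  refine filter_congr fun i hi => ?_
  have hi0 : 0 < i := (Nat.zero_le p).trans_lt (mem_Ioc.1 hi).1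
  rw [hm.dvd_iff_le_level hi0, hm.dvd_iff_le_level hi0, ← add_assoc, Nat.even_add_one]
  -- a multiple of `m a` of the wrong parity has level `≠ a`, so it is a multiple of `m (a + 1)`
  constructor
  · rintro ⟨ha, hodd⟩
    exact ⟨(Nat.le_succ a).trans ha, hodd⟩
  · rintro ⟨ha, hodd⟩
    refine ⟨lt_of_le_of_ne ha ?_, hodd⟩
    rintro rfl
    exact hodd (Even.add_self _)

lemma levelParityCount_le_one (hm : IsDivisorChain m) {a n : ℕ} (hn : n ≤ m a) (p : ℕ) :
    levelParityCount m a p n ≤ 1 := by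
  have := levelParityCount_add_succ hm a p n
  have := multiplesIn_le_one (hm.pos a) hn p
  omega

lemma count_true_factorAt {U : ℕ → Bool} (hm : IsDivisorChain m)
    (hU : ∀ i, U i = decide (Odd (level m (i + 1)))) (p n : ℕ) :
    (factorAt U p n).count true = levelParityCount m 1 p n := by
  have hcount : (factorAt U p n).count true = #{i ∈ range n | U (p + i)} := by
    rw [factorAt, List.count_eq_countP, List.countP_map, card_def, filter_val,
      ← Multiset.countP_eq_card_filter, range_val, Multiset.range, Multiset.coe_countP]
    simp [Function.comp_def]
  have hshift : #{i ∈ range n | U (p + i)} = #{i ∈ Ioc p (p + n) | Odd (level m i)} := by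
    refine card_nbij' (fun i => p + i + 1) (fun i => i - p - 1) ?_ ?_ ?_ ?_ <;> intro i <;>
      simp [hU] <;> grind
  rw [hcount, hshift, levelParityCount]
  refine congrArg card (filter_congr fun i hi => ?_)
  rw [hm.dvd_iff_le_level ((Nat.zero_le p).trans_lt (mem_Ioc.1 hi).1), Nat.even_add_one,
    Nat.not_even_iff_odd]
  exact ⟨fun h => ⟨Nat.one_le_iff_ne_zero.2 fun h0 => by simp [h0] at h, h⟩, And.right⟩

lemma levelParityCount_le_add (hm : IsDivisorChain m) {a k n w : ℕ}
    (h : ∀ p q, levelParityCount m (a + k) p n ≤ levelParityCount m (a + k) q n + w) (p q : ℕ) :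
    levelParityCount m a p n ≤ levelParityCount m a q n + (k + w) := by
  induction k generalizing a p q with
  | zero => simpa using h p q
  | succ k ih =>
    have ih' := ih (a := a + 1) (by simpa [add_assoc, add_comm 1 k] using h) q p
    have hp := levelParityCount_add_succ hm a p n
    have hq := levelParityCount_add_succ hm a q n
    have ht := multiplesIn_le_add_one (hm.pos a) p q n
    omega

lemma levelParityCount_eq_iff (hm : IsDivisorChain m) {a k p q n : ℕ}
    (h : ∀ i < k, multiplesIn (m (a + i)) p n = multiplesIn (m (a + i)) q n) :
    levelParityCount m a p n = levelParityCount m a q n ↔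
      levelParityCount m (a + k) p n = levelParityCount m (a + k) q n := by
  induction k generalizing a with
  | zero => rfl
  | succ k ih =>
    have ih' := ih (a := a + 1) fun i hi => by
      simpa [add_assoc, add_comm 1 i] using h (i + 1) (by omega)
    have hp := levelParityCount_add_succ hm a p n
    have hq := levelParityCount_add_succ hm a q n
    have ht := h 0 k.succ_pos
    rw [add_zero] at ht
    rw [show a + (k + 1) = a + 1 + k by omega, ← ih']
    omega

end LevelParity

section AbelianComplexity

variable {m : ℕ → ℕ} {U : ℕ → Bool}

lemma rho_one_le (hm : IsDivisorChain m) (hU : ∀ i, U i = decide (Odd (level m (i + 1))))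
    {n k : ℕ} (hn : n ≤ m (k + 1)) : rho 1 U n ≤ k + 2 := by
  simp only [rho_one_eq_ncard_range_count_true, count_true_factorAt hm hU]
  refine ncard_range_le_of_le_add (levelParityCount_le_add hm (a := 1) (k := k) (w := 1) ?_)
  intro p q
  have := levelParityCount_le_one hm (a := 1 + k) (n := n) (add_comm 1 k ▸ hn) p
  omega

lemma rho_one_eq_two (hm : IsDivisorChain m) (hU : ∀ i, U i = decide (Odd (level m (i + 1))))
    (j : ℕ) : rho 1 U (m j) = 2 := by
  have hlt : m j < m (1 + j) := hm.strictMono (by omega)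
  have hsame : ∀ p q, levelParityCount m 1 p (m j) = levelParityCount m 1 q (m j) ↔
      levelParityCount m (1 + j) p (m j) = levelParityCount m (1 + j) q (m j) := fun p q =>
    levelParityCount_eq_iff hm fun i hi => multiplesIn_of_dvd (hm.dvd_of_le (by omega)) p q
  have hle : ∀ p, levelParityCount m (1 + j) p (m j) ≤ 1 := levelParityCount_le_one hm hlt.le
  have hzero : levelParityCount m (1 + j) 0 (m j) = 0 := by
    have := levelParityCount_add_succ hm (1 + j) 0 (m j)
    rw [multiplesIn_eq, zero_add, Nat.div_eq_of_lt hlt, Nat.zero_div] at this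
    omega
  -- the window `(p₁, p₁ + m j]` ends at `m (1 + j)`, whose level is `1 + j`
  set p₁ := m (1 + j) - m j
  have hone : levelParityCount m (1 + j) p₁ (m j) = 1 := by
    refine le_antisymm (hle p₁) (card_pos.2 ⟨m (1 + j), mem_filter.2 ⟨?_, dvd_rfl, ?_⟩⟩)
    · exact mem_Ioc.2 ⟨Nat.sub_lt (hm.pos _) (hm.pos j), by omega⟩
    · rw [hm.level_self]
      exact Even.add_self _
  have hrange : (Set.range fun p => levelParityCount m 1 p (m j)) =
      {levelParityCount m 1 0 (m j), levelParityCount m 1 p₁ (m j)} := by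
    refine Set.Subset.antisymm (Set.range_subset_iff.2 fun p => ?_)
      (Set.pair_subset (Set.mem_range_self 0) (Set.mem_range_self p₁))
    rcases Nat.le_one_iff_eq_zero_or_eq_one.1 (hle p) with h | h
    · exact Or.inl ((hsame p 0).2 (h.trans hzero.symm))
    · exact Or.inr ((hsame p p₁).2 (h.trans hone.symm))
  simp only [rho_one_eq_ncard_range_count_true, count_true_factorAt hm hU, hrange]
  exact Set.ncard_pair (by rw [Ne, hsame, hzero, hone]; exact zero_ne_one)

end AbelianComplexity

theorem stmt17 (f : ℕ → ℕ) (hf : ∀ j, 1 ≤ j → 2 ≤ f j)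
    (m : ℕ → ℕ) (hm0 : m 0 = 1) (hms : ∀ j, m (j + 1) = m j * f (j + 1))
    (U : ℕ → Bool)
    (hU : ∀ i : ℕ, U i = decide (Odd (sSup { j : ℕ | m j ∣ (i + 1) }))) :
    (∀ n n' : ℕ, 1 ≤ n → m (n' - 1) < n → n ≤ m n' → rho 1 U n ≤ n' + 1) ∧
    (∀ j : ℕ, 1 ≤ j → rho 1 U (m j) = 2) := by
  have hm := IsDivisorChain.of_mul (fun j => hf (j + 1) (Nat.le_add_left 1 j)) hm0 hms
  refine ⟨fun n n' _ hlow hhigh => ?_, fun j _ => rho_one_eq_two hm hU j⟩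
  cases n' with
  | zero => exact absurd hhigh (not_le.2 hlow)
  | succ k => exact rho_one_le hm hU hhigh
end
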